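/- Under the two-phase setup, fix k̃ ∈ (0,1) and restrict to points with |y|·ω(x,ξ)^{−1} ≤ k̃⟨x⟩ and |η|·ω(x,ξ) ≤ k̃⟨ξ⟩. Then, provided τ = τ₁+τ₂ is sufficiently small, there exist constants c₁, c₂ > 0, independent of the point, such that c₁(|y| + |η|) ≤ |∇_y 𝜑(y,η;x,ξ)| + |∇_η 𝜑(y,η;x,ξ)| ≤ c₂(|y| + |η|) for all such (y,η,x,ξ). -/

import Mathlib

open scoped BigOperators
open Set MeasureTheory

noncomputable section

/-- `ℝ^n` modelled as functions `Fin n → ℝ`. -/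
abbrev V (n : ℕ) := Fin n → ℝ

/-- The Japanese bracket `⟨x⟩ = (1 + |x|²)^{1/2}` (Euclidean norm). -/
noncomputable def jb {n : ℕ} (x : V n) : ℝ := Real.sqrt (1 + ∑ i, (x i) ^ 2)

/-- Euclidean norm on `V n`. -/
noncomputable def enorm2 {n : ℕ} (x : V n) : ℝ := Real.sqrt (∑ i, (x i) ^ 2)

/-- Euclidean inner product `x · ξ`. -/
noncomputable def dotV {n : ℕ} (x ξ : V n) : ℝ := ∑ i, x i * ξ i

/-- Partial derivative in the `i`-th coordinate of the first (the `x`) variable. -/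
noncomputable def pdX {n : ℕ} {E : Type*} [NormedAddCommGroup E] [NormedSpace ℝ E]
    (i : Fin n) (f : V n → V n → E) : V n → V n → E :=
  fun x ξ => fderiv ℝ (fun y => f y ξ) x (Pi.single i 1)

/-- Partial derivative in the `i`-th coordinate of the second (the `ξ`) variable. -/
noncomputable def pdXi {n : ℕ} {E : Type*} [NormedAddCommGroup E] [NormedSpace ℝ E]
    (i : Fin n) (f : V n → V n → E) : V n → V n → E :=
  fun x ξ => fderiv ℝ (fun η => f x η) ξ (Pi.single i 1)

/-- Multi-index derivative `∂_x^β ∂_ξ^α f`: a multi-index is recorded as a list of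
coordinate directions (its length is the order `|β|`, resp. `|α|`). -/
noncomputable def mderiv {n : ℕ} {E : Type*} [NormedAddCommGroup E] [NormedSpace ℝ E]
    (β α : List (Fin n)) (f : V n → V n → E) : V n → V n → E :=
  List.foldr (fun i g => pdX i g) (List.foldr (fun i g => pdXi i g) f α) β

/-- Gradient in the first variable. -/
noncomputable def gradX {n : ℕ} (f : V n → V n → ℝ) (x ξ : V n) : V n :=
  fun i => pdX i f x ξ

/-- Gradient in the second variable. -/
noncomputable def gradXi {n : ℕ} (f : V n → V n → ℝ) (x ξ : V n) : V n :=
  fun i => pdXi i f x ξ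

/-- `J = φ - x·ξ`. -/
noncomputable def Jfun {n : ℕ} (φ : V n → V n → ℝ) : V n → V n → ℝ :=
  fun x ξ => φ x ξ - dotV x ξ

/-- The SG symbol class `S^{m,μ}(ℝ^{2n})`. -/
def IsSGSymbol {n : ℕ} (m μ : ℝ) (f : V n → V n → ℝ) : Prop :=
  ContDiff ℝ (⊤ : ℕ∞) (fun p : V n × V n => f p.1 p.2) ∧
  ∀ β α : List (Fin n), ∃ C > 0, ∀ x ξ : V n,
    |mderiv β α f x ξ| ≤ C * jb x ^ (m - (β.length : ℝ)) * jb ξ ^ (μ - (α.length : ℝ))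

/-- SG phase functions: `φ ∈ S^{1,1}`, `⟨∇_x φ⟩ ≍ ⟨ξ⟩`, `⟨∇_ξ φ⟩ ≍ ⟨x⟩`. -/
def IsPhaseFunction {n : ℕ} (φ : V n → V n → ℝ) : Prop :=
  IsSGSymbol 1 1 φ ∧
  (∃ c₁ > 0, ∃ c₂ > 0, ∀ x ξ : V n,
    c₁ * jb ξ ≤ jb (gradX φ x ξ) ∧ jb (gradX φ x ξ) ≤ c₂ * jb ξ) ∧
  (∃ c₁ > 0, ∃ c₂ > 0, ∀ x ξ : V n,
    c₁ * jb x ≤ jb (gradXi φ x ξ) ∧ jb (gradXi φ x ξ) ≤ c₂ * jb x)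

/-- The mixed Hessian `φ''_{xξ}`. -/
noncomputable def mixedHess {n : ℕ} (φ : V n → V n → ℝ) (x ξ : V n) :
    Matrix (Fin n) (Fin n) ℝ :=
  Matrix.of fun i j => pdX i (pdXi j φ) x ξ

/-- Regular SG phase functions of class `P_r(τ)`:
`|det φ''_{xξ}| ≥ r` and `|∂_x^β ∂_ξ^α J| ≤ τ ⟨x⟩^{1-|β|} ⟨ξ⟩^{1-|α|}` for `|α+β| ≤ 2`. -/
def IsRegularPhase {n : ℕ} (r τ : ℝ) (φ : V n → V n → ℝ) : Prop :=
  IsPhaseFunction φ ∧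
  (∀ x ξ : V n, r ≤ |(mixedHess φ x ξ).det|) ∧
  ∀ β α : List (Fin n), β.length + α.length ≤ 2 → ∀ x ξ : V n,
    |mderiv β α (Jfun φ) x ξ| ≤ τ * jb x ^ (1 - (β.length : ℝ)) * jb ξ ^ (1 - (α.length : ℝ))

/-- `(Y,N)` solves the two-phase critical-point system
`Y = ∇_ξφ₁(x,N)`, `N = ∇_xφ₂(Y,ξ)`. -/
def TwoPhaseCrit {n : ℕ} (φ₁ φ₂ : V n → V n → ℝ) (Y N : V n → V n → V n) : Prop :=
  ∀ x ξ : V n, Y x ξ = gradXi φ₁ x (N x ξ) ∧ N x ξ = gradX φ₂ (Y x ξ) ξ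

/-- Uniqueness of the two-phase critical point. -/
def TwoPhaseCritUnique {n : ℕ} (φ₁ φ₂ : V n → V n → ℝ) (Y N : V n → V n → V n) : Prop :=
  ∀ x ξ Y' N' : V n, (Y' = gradXi φ₁ x N' ∧ N' = gradX φ₂ Y' ξ) → Y' = Y x ξ ∧ N' = N x ξ

/-- `ω(x,ξ) = ⟨x⟩^{-1/2} ⟨ξ⟩^{1/2}`. -/
noncomputable def omegaW {n : ℕ} (x ξ : V n) : ℝ :=
  jb x ^ (-(1 / 2 : ℝ)) * jb ξ ^ ((1 / 2 : ℝ))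

/-- The two-phase multi-product `(φ₁#φ₂)(x,ξ)`, built from the critical point `(Y,N)`. -/
noncomputable def sharp2 {n : ℕ} (φ₁ φ₂ : V n → V n → ℝ) (Y N : V n → V n → V n)
    (x ξ : V n) : ℝ :=
  φ₁ x (N x ξ) - dotV (Y x ξ) (N x ξ) + φ₂ (Y x ξ) ξ

/-- `φ₀(x,x',ξ',ξ) = φ₁(x,ξ') - x'·ξ' + φ₂(x',ξ) - (φ₁#φ₂)(x,ξ)`. -/
noncomputable def phi0 {n : ℕ} (φ₁ φ₂ : V n → V n → ℝ) (Y N : V n → V n → V n)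
    (x x' ξ' ξ : V n) : ℝ :=
  φ₁ x ξ' - dotV x' ξ' + φ₂ x' ξ - sharp2 φ₁ φ₂ Y N x ξ

/-- `𝜑(y,η;x,ξ) = φ₀(x, Y+yω^{-1}, N+ηω, ξ)` (written with argument order `x ξ y η`). -/
noncomputable def phiT {n : ℕ} (φ₁ φ₂ : V n → V n → ℝ) (Y N : V n → V n → V n)
    (x ξ y η : V n) : ℝ :=
  phi0 φ₁ φ₂ Y N x (Y x ξ + (omegaW x ξ)⁻¹ • y) (N x ξ + omegaW x ξ • η) ξ

/-- `⟨(y,η)⟩ = (1 + |y|² + |η|²)^{1/2}`. -/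
noncomputable def jb2 {n : ℕ} (y η : V n) : ℝ :=
  Real.sqrt (1 + (∑ i, (y i) ^ 2) + (∑ i, (η i) ^ 2))

/-- The region `|y|ω^{-1} ≤ k̃⟨x⟩`, `|η|ω ≤ k̃⟨ξ⟩`. -/
def InRegion {n : ℕ} (k : ℝ) (x ξ y η : V n) : Prop :=
  enorm2 y * (omegaW x ξ)⁻¹ ≤ k * jb x ∧ enorm2 η * omegaW x ξ ≤ k * jb ξ

/-- Componentwise SG class for vector valued symbols. -/
def IsSGVec {n : ℕ} (m μ : ℝ) (F : V n → V n → V n) : Prop :=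
  ∀ i : Fin n, IsSGSymbol m μ (fun x ξ => F x ξ i)

/-- `⟨F(x,ξ)⟩ ≍ ⟨x⟩`. -/
def BracketEquivX {n : ℕ} (F : V n → V n → V n) : Prop :=
  ∃ c₁ > 0, ∃ c₂ > 0, ∀ x ξ : V n, c₁ * jb x ≤ jb (F x ξ) ∧ jb (F x ξ) ≤ c₂ * jb x

/-- `⟨F(x,ξ)⟩ ≍ ⟨ξ⟩`. -/
def BracketEquivXi {n : ℕ} (F : V n → V n → V n) : Prop :=
  ∃ c₁ > 0, ∃ c₂ > 0, ∀ x ξ : V n, c₁ * jb ξ ≤ jb (F x ξ) ∧ jb (F x ξ) ≤ c₂ * jb ξ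

namespace Aux
variable {n : ℕ}

lemma enorm2_eq (x : V n) : enorm2 x = ‖(WithLp.equiv 2 (Fin n → ℝ)).symm x‖ := by
  rw [EuclideanSpace.norm_eq]
  simp [enorm2, WithLp.equiv_symm_apply, PiLp.toLp_apply, sq_abs]

lemma enorm2_nonneg (x : V n) : 0 ≤ enorm2 x := Real.sqrt_nonneg _

lemma enorm2_add_le (x y : V n) : enorm2 (x + y) ≤ enorm2 x + enorm2 y := by
  simp only [enorm2_eq, WithLp.equiv_symm_apply, WithLp.toLp_add]; exact norm_add_le _ _

lemma enorm2_neg (x : V n) : enorm2 (-x) = enorm2 x := by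
  simp [enorm2]

lemma enorm2_smul (c : ℝ) (x : V n) : enorm2 (c • x) = |c| * enorm2 x := by
  simp only [enorm2_eq, WithLp.equiv_symm_apply, WithLp.toLp_smul]; rw [norm_smul]; simp

lemma abs_le_enorm2 (x : V n) (i : Fin n) : |x i| ≤ enorm2 x := by
  rw [enorm2, ← Real.sqrt_sq_eq_abs]
  exact Real.sqrt_le_sqrt (Finset.single_le_sum (f := fun j => (x j)^2)
    (fun j _ => sq_nonneg _) (Finset.mem_univ i))

lemma norm_le_enorm2 (x : V n) : ‖x‖ ≤ enorm2 x :=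
  (pi_norm_le_iff_of_nonneg (enorm2_nonneg _)).2 fun i => by
    simpa using abs_le_enorm2 x i

lemma enorm2_le_sum_abs (x : V n) : enorm2 x ≤ ∑ i, |x i| := by
  rw [enorm2]
  have h : (∑ i, (x i)^2) ≤ (∑ i, |x i|)^2 := by
    rw [sq, Finset.sum_mul_sum]
    calc ∑ i, (x i)^2 = ∑ i, |x i| * |x i| := by
          simp [sq_abs, sq]
      _ ≤ ∑ i, ∑ j, |x i| * |x j| := by
          refine Finset.sum_le_sum fun i _ => ?_
          exact Finset.single_le_sum (f := fun j => |x i| * |x j|)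
            (fun j _ => mul_nonneg (abs_nonneg _) (abs_nonneg _)) (Finset.mem_univ i)
  calc Real.sqrt (∑ i, (x i)^2) ≤ Real.sqrt ((∑ i, |x i|)^2) := Real.sqrt_le_sqrt h
    _ = ∑ i, |x i| := Real.sqrt_sq (Finset.sum_nonneg fun i _ => abs_nonneg _)

end Aux

section JB
variable {n : ℕ}

lemma Aux.one_le_jb (x : V n) : 1 ≤ jb x := by
  rw [jb]
  have h : (1:ℝ) ≤ 1 + ∑ i, (x i)^2 :=
    le_add_of_nonneg_right (Finset.sum_nonneg fun i _ => sq_nonneg _)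
  calc (1:ℝ) = Real.sqrt 1 := by simp
    _ ≤ _ := Real.sqrt_le_sqrt h

lemma Aux.jb_pos (x : V n) : 0 < jb x := lt_of_lt_of_le one_pos (Aux.one_le_jb x)

lemma Aux.jb_eq (x : V n) : jb x = Real.sqrt (1 + (enorm2 x)^2) := by
  rw [jb, enorm2, Real.sq_sqrt (Finset.sum_nonneg fun i _ => sq_nonneg _)]

lemma Aux.enorm2_le_jb (x : V n) : enorm2 x ≤ jb x := by
  rw [Aux.jb_eq]
  have h := Real.le_sqrt (x := enorm2 x) (y := 1 + (enorm2 x)^2)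
    (Aux.enorm2_nonneg x) (by nlinarith [sq_nonneg (enorm2 x)])
  exact h.2 (by nlinarith)

/-- 1-Lipschitz property of jb wrt Euclidean distance. -/
lemma Aux.jb_le_jb_add (a b : V n) : jb a ≤ jb b + enorm2 (a - b) := by
  have hab : enorm2 a ≤ enorm2 b + enorm2 (a - b) := by
    have := Aux.enorm2_add_le b (a - b)
    simpa using this
  have hd := Aux.enorm2_nonneg (a - b)
  have hb := Aux.enorm2_nonneg b
  rw [Aux.jb_eq]
  have h1 : (1 + (enorm2 a)^2) ≤ (jb b + enorm2 (a-b))^2 := by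
    have hjb : jb b ^ 2 = 1 + (enorm2 b)^2 := by
      rw [Aux.jb_eq]; exact Real.sq_sqrt (by positivity)
    have hble : enorm2 b ≤ jb b := Aux.enorm2_le_jb b
    nlinarith [Aux.enorm2_nonneg a, Aux.jb_pos b]
  calc Real.sqrt (1 + (enorm2 a)^2) ≤ Real.sqrt ((jb b + enorm2 (a-b))^2) :=
        Real.sqrt_le_sqrt h1
    _ = jb b + enorm2 (a-b) := Real.sqrt_sq
        (by have := Aux.jb_pos b; have := Aux.enorm2_nonneg (a-b); linarith)

lemma Aux.jb_sub_le (a b : V n) : jb b - enorm2 (a - b) ≤ jb a := by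
  have := Aux.jb_le_jb_add b a
  have h : enorm2 (b - a) = enorm2 (a - b) := by
    rw [← Aux.enorm2_neg (b-a)]; congr 1; abel
  linarith [this, h.le, h.ge]

end JB
namespace Aux
variable {n : ℕ}

/-- The continuous linear map `p ↦ dotV p w`. -/
noncomputable def dotCLM (w : V n) : V n →L[ℝ] ℝ :=
  ∑ j, w j • (ContinuousLinearMap.proj j : ((i : Fin n) → (fun _ => ℝ) i) →L[ℝ] ℝ)

lemma dotCLM_apply (w p : V n) : dotCLM w p = dotV p w := by
  simp [dotCLM, dotV, ContinuousLinearMap.sum_apply, mul_comm]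

lemma dotCLM_single (w : V n) (i : Fin n) : dotCLM w (Pi.single i 1) = w i := by
  simp [dotCLM, ContinuousLinearMap.sum_apply, Pi.single_apply]

lemma hasFDerivAt_dot_left (w p : V n) :
    HasFDerivAt (fun q : V n => dotV q w) (dotCLM w) p := by
  have hfun : (fun q : V n => dotV q w) = ⇑(dotCLM w) :=
    funext fun q => (dotCLM_apply w q).symm
  rw [hfun]; exact (dotCLM w).hasFDerivAt

lemma dotV_comm (x ξ : V n) : dotV x ξ = dotV ξ x := by
  simp [dotV, mul_comm]

lemma hasFDerivAt_dot_right (w p : V n) :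
    HasFDerivAt (fun q : V n => dotV w q) (dotCLM w) p := by
  have hfun : (fun q : V n => dotV w q) = fun q : V n => dotV q w :=
    funext fun q => dotV_comm w q
  rw [hfun]; exact hasFDerivAt_dot_left w p

lemma contDiff_dotV : ContDiff ℝ (⊤ : ℕ∞) (fun p : V n × V n => dotV p.1 p.2) := by
  unfold dotV
  exact ContDiff.sum fun i _ =>
    (contDiff_pi.1 contDiff_fst i).mul (contDiff_pi.1 contDiff_snd i)

lemma contDiff_J {φ : V n → V n → ℝ}
    (hφ : ContDiff ℝ (⊤ : ℕ∞) (fun p : V n × V n => φ p.1 p.2)) :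
    ContDiff ℝ (⊤ : ℕ∞) (fun p : V n × V n => Jfun φ p.1 p.2) := by
  simp only [Jfun]; exact hφ.sub contDiff_dotV

lemma contDiff_slice_x {φ : V n → V n → ℝ}
    (hφ : ContDiff ℝ (⊤ : ℕ∞) (fun p : V n × V n => φ p.1 p.2)) (ξ : V n) :
    ContDiff ℝ (⊤ : ℕ∞) (fun q => φ q ξ) :=
  hφ.comp (contDiff_id.prodMk contDiff_const)

lemma contDiff_slice_xi {φ : V n → V n → ℝ}
    (hφ : ContDiff ℝ (⊤ : ℕ∞) (fun p : V n × V n => φ p.1 p.2)) (x : V n) :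
    ContDiff ℝ (⊤ : ℕ∞) (fun q => φ x q) :=
  hφ.comp (contDiff_const.prodMk contDiff_id)

lemma pdX_eq_J {φ : V n → V n → ℝ}
    (hφ : ContDiff ℝ (⊤ : ℕ∞) (fun p : V n × V n => φ p.1 p.2)) (i : Fin n) (q ξ : V n) :
    pdX i φ q ξ = ξ i + pdX i (Jfun φ) q ξ := by
  have hJ : DifferentiableAt ℝ (fun p => Jfun φ p ξ) q :=
    ((contDiff_slice_x (contDiff_J hφ) ξ).differentiable (by simp)).differentiableAt
  have hd : HasFDerivAt (fun p : V n => dotV p ξ) (dotCLM ξ) q :=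
    hasFDerivAt_dot_left ξ q
  have hfun : (fun p => φ p ξ) = fun p => Jfun φ p ξ + dotV p ξ := by
    funext p; simp [Jfun]
  show fderiv ℝ (fun p => φ p ξ) q (Pi.single i 1) = _
  rw [hfun, fderiv_fun_add hJ hd.differentiableAt, hd.fderiv]
  simp only [ContinuousLinearMap.add_apply, dotCLM_single]
  rw [add_comm]; rfl

lemma pdXi_eq_J {φ : V n → V n → ℝ}
    (hφ : ContDiff ℝ (⊤ : ℕ∞) (fun p : V n × V n => φ p.1 p.2)) (i : Fin n) (x q : V n) :
    pdXi i φ x q = x i + pdXi i (Jfun φ) x q := by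
  have hJ : DifferentiableAt ℝ (fun p => Jfun φ x p) q :=
    ((contDiff_slice_xi (contDiff_J hφ) x).differentiable (by simp)).differentiableAt
  have hd : HasFDerivAt (fun p : V n => dotV x p) (dotCLM x) q :=
    hasFDerivAt_dot_right x q
  have hfun : (fun p => φ x p) = fun p => Jfun φ x p + dotV x p := by
    funext p; simp [Jfun]
  show fderiv ℝ (fun p => φ x p) q (Pi.single i 1) = _
  rw [hfun, fderiv_fun_add hJ hd.differentiableAt, hd.fderiv]
  simp only [ContinuousLinearMap.add_apply, dotCLM_single]
  rw [add_comm]; rfl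

end Aux
namespace Aux
variable {n : ℕ}

lemma omegaW_pos (x ξ : V n) : 0 < omegaW x ξ :=
  mul_pos (Real.rpow_pos_of_pos (jb_pos x) _) (Real.rpow_pos_of_pos (jb_pos ξ) _)

lemma omegaW_sq (x ξ : V n) : omegaW x ξ ^ 2 = jb ξ / jb x := by
  rw [omegaW, mul_pow, ← Real.rpow_natCast (jb x ^ _) 2, ← Real.rpow_natCast (jb ξ ^ _) 2,
    ← Real.rpow_mul (jb_pos x).le, ← Real.rpow_mul (jb_pos ξ).le]
  norm_num [Real.rpow_neg_one]
  rw [div_eq_mul_inv, mul_comm]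

lemma omegaW_inv_sq (x ξ : V n) : ((omegaW x ξ)⁻¹) ^ 2 = jb x / jb ξ := by
  rw [inv_pow, omegaW_sq, inv_div]

/-- Decomposition of a vector into coordinates. -/
lemma pi_decomp (v : V n) : v = ∑ j, v j • (Pi.single j (1:ℝ) : V n) := by
  funext kk
  rw [Finset.sum_apply]
  simp [Pi.single_apply]

/-- Operator-norm bound for a linear map with componentwise bounds. -/
lemma opNorm_le_of_comp (L : V n →L[ℝ] ℝ) (K : ℝ) (hK : 0 ≤ K)
    (h : ∀ j, |L (Pi.single j 1)| ≤ K) : ‖L‖ ≤ (n : ℝ) * K := by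
  refine ContinuousLinearMap.opNorm_le_bound _ (by positivity) fun v => ?_
  have hv : L v = ∑ j, v j * L (Pi.single j 1) := by
    conv_lhs => rw [pi_decomp v]
    rw [map_sum]
    exact Finset.sum_congr rfl fun j _ => by rw [L.map_smul]; rfl
  rw [Real.norm_eq_abs, hv]
  calc |∑ j, v j * L (Pi.single j 1)| ≤ ∑ j, |v j * L (Pi.single j 1)| :=
        Finset.abs_sum_le_sum_abs _ _
    _ ≤ ∑ _j : Fin n, K * ‖v‖ := by
        refine Finset.sum_le_sum fun j _ => ?_
        rw [abs_mul]
        have h1 : |v j| ≤ ‖v‖ := by simpa using norm_le_pi_norm v j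
        exact mul_le_mul h1 (h j) (abs_nonneg _) (norm_nonneg _) |>.trans_eq (mul_comm _ _)
    _ = (n : ℝ) * K * ‖v‖ := by
        rw [Finset.sum_const, Finset.card_univ, Fintype.card_fin, nsmul_eq_mul]; ring

/-- Mean value estimate along a segment with a pointwise derivative bound. -/
lemma lip_est (g : V n → ℝ) (hg : ContDiff ℝ (⊤ : ℕ∞) g) (K m : ℝ) (hK : 0 ≤ K)
    (c v : V n)
    (hseg : ∀ t : ℝ, t ∈ Set.Icc (0:ℝ) 1 → m ≤ jb (c + t • v))
    (hbound : ∀ p, m ≤ jb p → ∀ j, |fderiv ℝ g p (Pi.single j 1)| ≤ K) :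
    |g (c + v) - g c| ≤ (n : ℝ) * K * enorm2 v := by
  have hconv : Convex ℝ (segment ℝ c (c + v)) := convex_segment _ _
  have hmem : ∀ p ∈ segment ℝ c (c + v), m ≤ jb p := by
    intro p hp
    rw [segment_eq_image'] at hp
    obtain ⟨t, ht, rfl⟩ := hp
    simpa using hseg t ht
  have hdiff : ∀ p ∈ segment ℝ c (c + v), DifferentiableAt ℝ g p :=
    fun p _ => (hg.differentiable (by simp)).differentiableAt
  have hb : ∀ p ∈ segment ℝ c (c + v), ‖fderiv ℝ g p‖ ≤ (n : ℝ) * K :=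
    fun p hp => opNorm_le_of_comp _ K hK (hbound p (hmem p hp))
  have := hconv.norm_image_sub_le_of_norm_fderiv_le hdiff hb
    (left_mem_segment ℝ c (c + v)) (right_mem_segment ℝ c (c + v))
  rw [Real.norm_eq_abs] at this
  calc |g (c + v) - g c| ≤ (n:ℝ) * K * ‖c + v - c‖ := this
    _ ≤ (n:ℝ) * K * enorm2 v := by
        have h1 : ‖c + v - c‖ = ‖v‖ := by congr 1; abel
        rw [h1]
        exact mul_le_mul_of_nonneg_left (norm_le_enorm2 v) (by positivity)

end Aux
namespace Aux
variable {n : ℕ}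

lemma gradX_phiT (φ₁ φ₂ : V n → V n → ℝ)
    (h2 : ContDiff ℝ (⊤ : ℕ∞) (fun p : V n × V n => φ₂ p.1 p.2))
    (Y N : V n → V n → V n) (x ξ y η : V n) (i : Fin n) :
    gradX (fun y' η' => phiT φ₁ φ₂ Y N x ξ y' η') y η i
      = (omegaW x ξ)⁻¹ *
        (-((N x ξ + omegaW x ξ • η) i) + pdX i φ₂ (Y x ξ + (omegaW x ξ)⁻¹ • y) ξ) := by
  set a := (omegaW x ξ)⁻¹ with ha
  set c := Y x ξ with hc
  set w := N x ξ + omegaW x ξ • η with hw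
  set S := sharp2 φ₁ φ₂ Y N x ξ with hS
  set p₀ := c + a • y with hp₀
  have hA : HasFDerivAt (fun y' : V n => c + a • y')
      (a • ContinuousLinearMap.id ℝ (V n)) y := by
    have h1 : HasFDerivAt (fun y' : V n => a • y')
        (a • ContinuousLinearMap.id ℝ (V n)) y :=
      (ContinuousLinearMap.id ℝ (V n)).hasFDerivAt.const_smul a
    exact h1.const_add c
  have hφslice : HasFDerivAt (fun p => φ₂ p ξ) (fderiv ℝ (fun p => φ₂ p ξ) p₀) p₀ :=
    (((contDiff_slice_x h2 ξ).differentiable (by simp)) p₀).hasFDerivAt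
  have hG : HasFDerivAt (fun p : V n => φ₁ x w - dotV p w + φ₂ p ξ - S)
      (-(dotCLM w) + fderiv ℝ (fun p => φ₂ p ξ) p₀) p₀ :=
    ((((hasFDerivAt_dot_left w p₀).const_sub (φ₁ x w)).add hφslice).sub_const S)
  have hfd : fderiv ℝ (fun y' => phiT φ₁ φ₂ Y N x ξ y' η) y
      = (-(dotCLM w) + fderiv ℝ (fun p => φ₂ p ξ) p₀).comp
          (a • ContinuousLinearMap.id ℝ (V n)) := by
    have heq : (fun y' => phiT φ₁ φ₂ Y N x ξ y' η)
        = (fun p : V n => φ₁ x w - dotV p w + φ₂ p ξ - S) ∘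
            (fun y' : V n => c + a • y') := by
      funext y'; simp only [Function.comp, phiT, phi0, hw, hc, hS, ha]
    rw [heq]
    exact (hG.comp y hA).fderiv
  show fderiv ℝ (fun y' => phiT φ₁ φ₂ Y N x ξ y' η) y (Pi.single i 1) = _
  rw [hfd]
  simp only [ContinuousLinearMap.comp_apply, ContinuousLinearMap.smul_apply,
    ContinuousLinearMap.id_apply, ContinuousLinearMap.map_smul,
    ContinuousLinearMap.add_apply, ContinuousLinearMap.neg_apply, dotCLM_single,
    smul_eq_mul]
  show -(a * w i) + a * pdX i φ₂ p₀ ξ = _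
  ring

lemma gradXi_phiT (φ₁ φ₂ : V n → V n → ℝ)
    (h1 : ContDiff ℝ (⊤ : ℕ∞) (fun p : V n × V n => φ₁ p.1 p.2))
    (Y N : V n → V n → V n) (x ξ y η : V n) (i : Fin n) :
    gradXi (fun y' η' => phiT φ₁ φ₂ Y N x ξ y' η') y η i
      = omegaW x ξ *
        (pdXi i φ₁ x (N x ξ + omegaW x ξ • η) - (Y x ξ + (omegaW x ξ)⁻¹ • y) i) := by
  set b := omegaW x ξ with hb
  set x' := Y x ξ + (omegaW x ξ)⁻¹ • y with hx'
  set S := sharp2 φ₁ φ₂ Y N x ξ with hS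
  set q₀ := N x ξ + b • η with hq₀
  have hB : HasFDerivAt (fun η' : V n => N x ξ + b • η')
      (b • ContinuousLinearMap.id ℝ (V n)) η := by
    have h1' : HasFDerivAt (fun η' : V n => b • η')
        (b • ContinuousLinearMap.id ℝ (V n)) η :=
      (ContinuousLinearMap.id ℝ (V n)).hasFDerivAt.const_smul b
    exact h1'.const_add (N x ξ)
  have hφslice : HasFDerivAt (fun q => φ₁ x q) (fderiv ℝ (fun q => φ₁ x q) q₀) q₀ :=
    (((contDiff_slice_xi h1 x).differentiable (by simp)) q₀).hasFDerivAt
  have hG : HasFDerivAt (fun q : V n => φ₁ x q - dotV x' q + φ₂ x' ξ - S)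
      (fderiv ℝ (fun q => φ₁ x q) q₀ - dotCLM x') q₀ :=
    (((hφslice.sub (hasFDerivAt_dot_right x' q₀)).add_const (φ₂ x' ξ)).sub_const S)
  have hfd : fderiv ℝ (fun η' => phiT φ₁ φ₂ Y N x ξ y η') η
      = (fderiv ℝ (fun q => φ₁ x q) q₀ - dotCLM x').comp
          (b • ContinuousLinearMap.id ℝ (V n)) := by
    have heq : (fun η' => phiT φ₁ φ₂ Y N x ξ y η')
        = (fun q : V n => φ₁ x q - dotV x' q + φ₂ x' ξ - S) ∘
            (fun η' : V n => N x ξ + b • η') := by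
      funext η'; simp only [Function.comp, phiT, phi0, hx', hS, hb]
    rw [heq]
    exact (hG.comp η hB).fderiv
  show fderiv ℝ (fun η' => phiT φ₁ φ₂ Y N x ξ y η') η (Pi.single i 1) = _
  rw [hfd]
  simp only [ContinuousLinearMap.comp_apply, ContinuousLinearMap.smul_apply,
    ContinuousLinearMap.id_apply, ContinuousLinearMap.map_smul,
    ContinuousLinearMap.sub_apply, dotCLM_single, smul_eq_mul]
  show b * pdXi i φ₁ x q₀ - b * x' i = _
  ring

end Aux
namespace Aux
variable {n : ℕ}

lemma gradX_phiT' (φ₁ φ₂ : V n → V n → ℝ)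
    (h2 : ContDiff ℝ (⊤ : ℕ∞) (fun p : V n × V n => φ₂ p.1 p.2))
    (Y N : V n → V n → V n) (hcrit : TwoPhaseCrit φ₁ φ₂ Y N) (x ξ y η : V n) (i : Fin n) :
    gradX (fun y' η' => phiT φ₁ φ₂ Y N x ξ y' η') y η i
      = (omegaW x ξ)⁻¹ * (pdX i (Jfun φ₂) (Y x ξ + (omegaW x ξ)⁻¹ • y) ξ
          - pdX i (Jfun φ₂) (Y x ξ) ξ) - η i := by
  have hN : N x ξ i = ξ i + pdX i (Jfun φ₂) (Y x ξ) ξ := by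
    have h := (hcrit x ξ).2
    have h' : N x ξ i = pdX i φ₂ (Y x ξ) ξ := by rw [h]; rfl
    rw [h', pdX_eq_J h2]
  rw [gradX_phiT φ₁ φ₂ h2 Y N x ξ y η i, pdX_eq_J h2]
  have hadd : (N x ξ + omegaW x ξ • η) i = N x ξ i + omegaW x ξ * η i := rfl
  rw [hadd, hN]
  have hω : (omegaW x ξ)⁻¹ * omegaW x ξ = 1 := inv_mul_cancel₀ (omegaW_pos x ξ).ne'
  linear_combination (-(η i)) * hω

lemma gradXi_phiT' (φ₁ φ₂ : V n → V n → ℝ)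
    (h1 : ContDiff ℝ (⊤ : ℕ∞) (fun p : V n × V n => φ₁ p.1 p.2))
    (Y N : V n → V n → V n) (hcrit : TwoPhaseCrit φ₁ φ₂ Y N) (x ξ y η : V n) (i : Fin n) :
    gradXi (fun y' η' => phiT φ₁ φ₂ Y N x ξ y' η') y η i
      = omegaW x ξ * (pdXi i (Jfun φ₁) x (N x ξ + omegaW x ξ • η)
          - pdXi i (Jfun φ₁) x (N x ξ)) - y i := by
  have hY : Y x ξ i = x i + pdXi i (Jfun φ₁) x (N x ξ) := by
    have h := (hcrit x ξ).1
    have h' : Y x ξ i = pdXi i φ₁ x (N x ξ) := by rw [h]; rfl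
    rw [h', pdXi_eq_J h1]
  rw [gradXi_phiT φ₁ φ₂ h1 Y N x ξ y η i, pdXi_eq_J h1]
  have hadd : (Y x ξ + (omegaW x ξ)⁻¹ • y) i = Y x ξ i + (omegaW x ξ)⁻¹ * y i := rfl
  rw [hadd, hY]
  have hω : omegaW x ξ * (omegaW x ξ)⁻¹ = 1 := mul_inv_cancel₀ (omegaW_pos x ξ).ne'
  linear_combination (-(y i)) * hω

lemma contDiff_pdX_slice {φ : V n → V n → ℝ}
    (hφ : ContDiff ℝ (⊤ : ℕ∞) (fun p : V n × V n => φ p.1 p.2)) (i : Fin n) (ξ : V n) :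
    ContDiff ℝ (⊤ : ℕ∞) (fun p => pdX i φ p ξ) := by
  have h := (contDiff_slice_x hφ ξ).fderiv_right (m := (⊤ : ℕ∞)) (by simp)
  exact h.clm_apply contDiff_const

lemma contDiff_pdXi_slice {φ : V n → V n → ℝ}
    (hφ : ContDiff ℝ (⊤ : ℕ∞) (fun p : V n × V n => φ p.1 p.2)) (i : Fin n) (x : V n) :
    ContDiff ℝ (⊤ : ℕ∞) (fun q => pdXi i φ x q) := by
  have h := (contDiff_slice_xi hφ x).fderiv_right (m := (⊤ : ℕ∞)) (by simp)
  exact h.clm_apply contDiff_const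

end Aux
set_option maxHeartbeats 2000000 in
/-- **Lemma 4.11.** On the region `|y|ω^{-1} ≤ k̃⟨x⟩`, `|η|ω ≤ k̃⟨ξ⟩`, for `τ = τ₁+τ₂`
small enough, `|∇_y𝜑| + |∇_η𝜑| ≍ |y| + |η|` with constants independent of the point. -/
theorem phiT_gradient_equiv (n : ℕ) (hn : 1 ≤ n) (r : ℝ) (hr : 0 < r)
    (k : ℝ) (hk0 : 0 < k) (hk1 : k < 1) :
    ∃ τstar > 0, ∀ τ₁ τ₂ : ℝ, 0 ≤ τ₁ → 0 ≤ τ₂ → τ₁ + τ₂ ≤ τstar →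
      ∀ φ₁ φ₂ : V n → V n → ℝ,
        IsRegularPhase r τ₁ φ₁ → IsRegularPhase r τ₂ φ₂ →
        ∀ Y N : V n → V n → V n,
          TwoPhaseCrit φ₁ φ₂ Y N → TwoPhaseCritUnique φ₁ φ₂ Y N →
          ContDiff ℝ (⊤ : ℕ∞) (fun p : V n × V n => Y p.1 p.2) →
          ContDiff ℝ (⊤ : ℕ∞) (fun p : V n × V n => N p.1 p.2) →
          ∃ c₁ > 0, ∃ c₂ > 0, ∀ x ξ y η : V n, InRegion k x ξ y η →
            c₁ * (enorm2 y + enorm2 η) ≤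
              enorm2 (gradX (fun y' η' => phiT φ₁ φ₂ Y N x ξ y' η') y η) +
                enorm2 (gradXi (fun y' η' => phiT φ₁ φ₂ Y N x ξ y' η') y η) ∧
            enorm2 (gradX (fun y' η' => phiT φ₁ φ₂ Y N x ξ y' η') y η) +
                enorm2 (gradXi (fun y' η' => phiT φ₁ φ₂ Y N x ξ y' η') y η) ≤
              c₂ * (enorm2 y + enorm2 η) := by

  refine ⟨(1 - k) / (8 * (n:ℝ)^2), ?_, ?_⟩
  · have hn' : (0:ℝ) < (n:ℝ) := by exact_mod_cast hn
    have hk' : (0:ℝ) < 1 - k := by linarith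
    positivity
  intro τ₁ τ₂ hτ₁ hτ₂ hsum φ₁ φ₂ hφ₁ hφ₂ Y N hcrit _huniq _hYs _hNs
  have hn' : (0:ℝ) < (n:ℝ) := by exact_mod_cast hn
  have hn1 : (1:ℝ) ≤ (n:ℝ) := by exact_mod_cast hn
  have hk' : (0:ℝ) < 1 - k := by linarith
  have h1s : ContDiff ℝ (⊤ : ℕ∞) (fun p : V n × V n => φ₁ p.1 p.2) := hφ₁.1.1.1
  have h2s : ContDiff ℝ (⊤ : ℕ∞) (fun p : V n × V n => φ₂ p.1 p.2) := hφ₂.1.1.1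
  have hJ1 := hφ₁.2.2
  have hJ2 := hφ₂.2.2
  have hτ1s : (n:ℝ) * τ₁ ≤ (1-k)/8 := by
    have hτ₁' : τ₁ ≤ (1-k)/(8*(n:ℝ)^2) := by linarith
    have h8 : τ₁ * (8*(n:ℝ)^2) ≤ 1 - k := (le_div_iff₀ (by positivity)).1 hτ₁'
    nlinarith [mul_nonneg (by linarith : (0:ℝ) ≤ (n:ℝ) - 1) (mul_nonneg hn'.le hτ₁)]
  have hτ2s : (n:ℝ) * τ₂ ≤ (1-k)/8 := by
    have hτ₂' : τ₂ ≤ (1-k)/(8*(n:ℝ)^2) := by linarith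
    have h8 : τ₂ * (8*(n:ℝ)^2) ≤ 1 - k := (le_div_iff₀ (by positivity)).1 hτ₂'
    nlinarith [mul_nonneg (by linarith : (0:ℝ) ≤ (n:ℝ) - 1) (mul_nonneg hn'.le hτ₂)]
  refine ⟨1/2, by norm_num, 2, by norm_num, ?_⟩
  intro x ξ y η hreg
  obtain ⟨hry, hrη⟩ := hreg
  have hωpos : 0 < omegaW x ξ := Aux.omegaW_pos x ξ
  have hapos : 0 < (omegaW x ξ)⁻¹ := inv_pos.2 hωpos
  have hjx := Aux.jb_pos x
  have hjξ := Aux.jb_pos ξ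
  -- first order bounds on Y - x and N - ξ
  have hYbd : enorm2 (Y x ξ - x) ≤ (n:ℝ) * τ₁ * jb x := by
    have hcomp : ∀ i, |(Y x ξ - x) i| ≤ τ₁ * jb x := by
      intro i
      have hYi : Y x ξ i = x i + pdXi i (Jfun φ₁) x (N x ξ) := by
        have h := (hcrit x ξ).1
        have h' : Y x ξ i = pdXi i φ₁ x (N x ξ) := by rw [h]; rfl
        rw [h', Aux.pdXi_eq_J h1s]
      have hb := hJ1 [] [i] (by simp) x (N x ξ)
      have hmd : mderiv [] [i] (Jfun φ₁) x (N x ξ) = pdXi i (Jfun φ₁) x (N x ξ) := rfl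
      rw [hmd] at hb
      simp only [List.length_nil, List.length_cons, Nat.cast_zero, Nat.cast_one] at hb
      norm_num [Real.rpow_one, Real.rpow_zero] at hb
      have hsub : (Y x ξ - x) i = pdXi i (Jfun φ₁) x (N x ξ) := by
        simp [hYi]
      rw [hsub]; exact hb
    calc enorm2 (Y x ξ - x) ≤ ∑ i, |(Y x ξ - x) i| := Aux.enorm2_le_sum_abs _
      _ ≤ ∑ _i : Fin n, τ₁ * jb x := Finset.sum_le_sum fun i _ => hcomp i
      _ = (n:ℝ) * τ₁ * jb x := by
          rw [Finset.sum_const, Finset.card_univ, Fintype.card_fin, nsmul_eq_mul]; ring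
  have hNbd : enorm2 (N x ξ - ξ) ≤ (n:ℝ) * τ₂ * jb ξ := by
    have hcomp : ∀ i, |(N x ξ - ξ) i| ≤ τ₂ * jb ξ := by
      intro i
      have hNi : N x ξ i = ξ i + pdX i (Jfun φ₂) (Y x ξ) ξ := by
        have h := (hcrit x ξ).2
        have h' : N x ξ i = pdX i φ₂ (Y x ξ) ξ := by rw [h]; rfl
        rw [h', Aux.pdX_eq_J h2s]
      have hb := hJ2 [i] [] (by simp) (Y x ξ) ξ
      have hmd : mderiv [i] [] (Jfun φ₂) (Y x ξ) ξ = pdX i (Jfun φ₂) (Y x ξ) ξ := rfl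
      rw [hmd] at hb
      simp only [List.length_nil, List.length_cons, Nat.cast_zero, Nat.cast_one] at hb
      norm_num [Real.rpow_one, Real.rpow_zero] at hb
      have hsub : (N x ξ - ξ) i = pdX i (Jfun φ₂) (Y x ξ) ξ := by
        simp [hNi]
      rw [hsub]; exact hb
    calc enorm2 (N x ξ - ξ) ≤ ∑ i, |(N x ξ - ξ) i| := Aux.enorm2_le_sum_abs _
      _ ≤ ∑ _i : Fin n, τ₂ * jb ξ := Finset.sum_le_sum fun i _ => hcomp i
      _ = (n:ℝ) * τ₂ * jb ξ := by
          rw [Finset.sum_const, Finset.card_univ, Fintype.card_fin, nsmul_eq_mul]; ring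
  -- segment bounds
  have hseg1 : ∀ t : ℝ, t ∈ Set.Icc (0:ℝ) 1 →
      (1-k)/2 * jb x ≤ jb (Y x ξ + t • ((omegaW x ξ)⁻¹ • y)) := by
    intro t ht
    have h1 := Aux.jb_sub_le (Y x ξ + t • ((omegaW x ξ)⁻¹ • y)) x
    have h2 : enorm2 (Y x ξ + t • ((omegaW x ξ)⁻¹ • y) - x)
        ≤ enorm2 (Y x ξ - x) + enorm2 (t • ((omegaW x ξ)⁻¹ • y)) := by
      have h3 := Aux.enorm2_add_le (Y x ξ - x) (t • ((omegaW x ξ)⁻¹ • y))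
      have he : Y x ξ - x + t • ((omegaW x ξ)⁻¹ • y)
          = Y x ξ + t • ((omegaW x ξ)⁻¹ • y) - x := by abel
      rwa [he] at h3
    have h3 : enorm2 (t • ((omegaW x ξ)⁻¹ • y)) ≤ k * jb x := by
      rw [Aux.enorm2_smul, Aux.enorm2_smul]
      have ht1 : |t| ≤ 1 := abs_le.2 ⟨by linarith [ht.1], ht.2⟩
      have hay : |(omegaW x ξ)⁻¹| * enorm2 y ≤ k * jb x := by
        rw [abs_of_pos hapos, mul_comm]; exact hry
      calc |t| * (|(omegaW x ξ)⁻¹| * enorm2 y) ≤ 1 * (k * jb x) :=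
            mul_le_mul ht1 hay (mul_nonneg (abs_nonneg _) (Aux.enorm2_nonneg _)) one_pos.le
        _ = k * jb x := one_mul _
    have h4 : enorm2 (Y x ξ - x) ≤ (1-k)/8 * jb x :=
      hYbd.trans (mul_le_mul_of_nonneg_right hτ1s hjx.le)
    nlinarith
  have hseg2 : ∀ t : ℝ, t ∈ Set.Icc (0:ℝ) 1 →
      (1-k)/2 * jb ξ ≤ jb (N x ξ + t • (omegaW x ξ • η)) := by
    intro t ht
    have h1 := Aux.jb_sub_le (N x ξ + t • (omegaW x ξ • η)) ξ
    have h2 : enorm2 (N x ξ + t • (omegaW x ξ • η) - ξ)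
        ≤ enorm2 (N x ξ - ξ) + enorm2 (t • (omegaW x ξ • η)) := by
      have h3 := Aux.enorm2_add_le (N x ξ - ξ) (t • (omegaW x ξ • η))
      have he : N x ξ - ξ + t • (omegaW x ξ • η)
          = N x ξ + t • (omegaW x ξ • η) - ξ := by abel
      rwa [he] at h3
    have h3 : enorm2 (t • (omegaW x ξ • η)) ≤ k * jb ξ := by
      rw [Aux.enorm2_smul, Aux.enorm2_smul]
      have ht1 : |t| ≤ 1 := abs_le.2 ⟨by linarith [ht.1], ht.2⟩
      have hay : |omegaW x ξ| * enorm2 η ≤ k * jb ξ := by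
        rw [abs_of_pos hωpos, mul_comm]; exact hrη
      calc |t| * (|omegaW x ξ| * enorm2 η) ≤ 1 * (k * jb ξ) :=
            mul_le_mul ht1 hay (mul_nonneg (abs_nonneg _) (Aux.enorm2_nonneg _)) one_pos.le
        _ = k * jb ξ := one_mul _
    have h4 : enorm2 (N x ξ - ξ) ≤ (1-k)/8 * jb ξ :=
      hNbd.trans (mul_le_mul_of_nonneg_right hτ2s hjξ.le)
    nlinarith
  -- main difference estimates
  have hy0 := Aux.enorm2_nonneg y
  have hη0 := Aux.enorm2_nonneg η
  have hAbd : enorm2 (gradX (fun y' η' => phiT φ₁ φ₂ Y N x ξ y' η') y η + η)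
      ≤ (1/4) * enorm2 y := by
    have hm : (0:ℝ) < (1-k)/2 * jb x := mul_pos (by linarith) hjx
    have hK0 : 0 ≤ τ₂ * jb ξ / ((1-k)/2 * jb x) :=
      div_nonneg (mul_nonneg hτ₂ hjξ.le) hm.le
    have hKbd : ∀ i : Fin n, ∀ p : V n, (1-k)/2 * jb x ≤ jb p → ∀ j : Fin n,
        |fderiv ℝ (fun p' => pdX i (Jfun φ₂) p' ξ) p (Pi.single j 1)|
          ≤ τ₂ * jb ξ / ((1-k)/2 * jb x) := by
      intro i p hp j
      have hb := hJ2 [j, i] [] (by simp) p ξ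
      have hmd : mderiv [j, i] [] (Jfun φ₂) p ξ
          = fderiv ℝ (fun p' => pdX i (Jfun φ₂) p' ξ) p (Pi.single j 1) := rfl
      rw [hmd] at hb
      simp only [List.length_cons, List.length_nil, Nat.cast_ofNat, Nat.cast_zero] at hb
      norm_num at hb
      rw [Real.rpow_neg_one] at hb
      have hinv : (jb p)⁻¹ ≤ ((1-k)/2 * jb x)⁻¹ := inv_anti₀ hm hp
      calc |fderiv ℝ (fun p' => pdX i (Jfun φ₂) p' ξ) p (Pi.single j 1)|
          ≤ τ₂ * (jb p)⁻¹ * jb ξ := hb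
        _ ≤ τ₂ * ((1-k)/2 * jb x)⁻¹ * jb ξ :=
            mul_le_mul_of_nonneg_right (mul_le_mul_of_nonneg_left hinv hτ₂) hjξ.le
        _ = τ₂ * jb ξ / ((1-k)/2 * jb x) := by ring
    have hlip : ∀ i : Fin n,
        |pdX i (Jfun φ₂) (Y x ξ + (omegaW x ξ)⁻¹ • y) ξ - pdX i (Jfun φ₂) (Y x ξ) ξ|
          ≤ (n:ℝ) * (τ₂ * jb ξ / ((1-k)/2 * jb x)) * ((omegaW x ξ)⁻¹ * enorm2 y) := by
      intro i
      have h := Aux.lip_est (fun p' => pdX i (Jfun φ₂) p' ξ)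
        (Aux.contDiff_pdX_slice (Aux.contDiff_J h2s) i ξ)
        (τ₂ * jb ξ / ((1-k)/2 * jb x)) ((1-k)/2 * jb x) hK0
        (Y x ξ) ((omegaW x ξ)⁻¹ • y) hseg1 (hKbd i)
      rw [Aux.enorm2_smul, abs_of_pos hapos] at h
      exact h
    have hcomp : ∀ i : Fin n,
        |(gradX (fun y' η' => phiT φ₁ φ₂ Y N x ξ y' η') y η + η) i|
          ≤ (omegaW x ξ)⁻¹ * ((n:ℝ) * (τ₂ * jb ξ / ((1-k)/2 * jb x))
              * ((omegaW x ξ)⁻¹ * enorm2 y)) := by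
      intro i
      have hform := Aux.gradX_phiT' φ₁ φ₂ h2s Y N hcrit x ξ y η i
      have happ : (gradX (fun y' η' => phiT φ₁ φ₂ Y N x ξ y' η') y η + η) i
          = (omegaW x ξ)⁻¹ * (pdX i (Jfun φ₂) (Y x ξ + (omegaW x ξ)⁻¹ • y) ξ
              - pdX i (Jfun φ₂) (Y x ξ) ξ) := by
        have : (gradX (fun y' η' => phiT φ₁ φ₂ Y N x ξ y' η') y η + η) i
            = gradX (fun y' η' => phiT φ₁ φ₂ Y N x ξ y' η') y η i + η i := rfl
        rw [this, hform]; ring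
      rw [happ, abs_mul, abs_of_pos hapos]
      exact mul_le_mul_of_nonneg_left (hlip i) hapos.le
    have hsum' : enorm2 (gradX (fun y' η' => phiT φ₁ φ₂ Y N x ξ y' η') y η + η)
        ≤ (n:ℝ) * ((omegaW x ξ)⁻¹ * ((n:ℝ) * (τ₂ * jb ξ / ((1-k)/2 * jb x))
            * ((omegaW x ξ)⁻¹ * enorm2 y))) := by
      calc enorm2 _ ≤ ∑ i, |(gradX (fun y' η' => phiT φ₁ φ₂ Y N x ξ y' η') y η + η) i| :=
            Aux.enorm2_le_sum_abs _
        _ ≤ ∑ _i : Fin n, (omegaW x ξ)⁻¹ * ((n:ℝ) * (τ₂ * jb ξ / ((1-k)/2 * jb x))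
              * ((omegaW x ξ)⁻¹ * enorm2 y)) := Finset.sum_le_sum fun i _ => hcomp i
        _ = (n:ℝ) * ((omegaW x ξ)⁻¹ * ((n:ℝ) * (τ₂ * jb ξ / ((1-k)/2 * jb x))
              * ((omegaW x ξ)⁻¹ * enorm2 y))) := by
            rw [Finset.sum_const, Finset.card_univ, Fintype.card_fin, nsmul_eq_mul]
    refine hsum'.trans ?_
    have ha2 : (omegaW x ξ)⁻¹ * (omegaW x ξ)⁻¹ = jb x / jb ξ := by
      have := Aux.omegaW_inv_sq x ξ; rwa [sq] at this
    have heq : (n:ℝ) * ((omegaW x ξ)⁻¹ * ((n:ℝ) * (τ₂ * jb ξ / ((1-k)/2 * jb x))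
          * ((omegaW x ξ)⁻¹ * enorm2 y)))
        = 2 * (n:ℝ)^2 * τ₂ / (1-k) * enorm2 y := by
      rw [show (n:ℝ) * ((omegaW x ξ)⁻¹ * ((n:ℝ) * (τ₂ * jb ξ / ((1-k)/2 * jb x))
          * ((omegaW x ξ)⁻¹ * enorm2 y)))
          = ((omegaW x ξ)⁻¹ * (omegaW x ξ)⁻¹) * ((n:ℝ) * ((n:ℝ) * (τ₂ * jb ξ
              / ((1-k)/2 * jb x)))) * enorm2 y by ring, ha2]
      field_simp
    rw [heq]
    have hτ₂' : τ₂ ≤ (1-k)/(8*(n:ℝ)^2) := by linarith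
    have h8 : τ₂ * (8*(n:ℝ)^2) ≤ 1 - k := (le_div_iff₀ (by positivity)).1 hτ₂'
    rw [div_mul_eq_mul_div, div_le_iff₀ hk']
    nlinarith [mul_le_mul_of_nonneg_right h8 hy0]
  have hBbd : enorm2 (gradXi (fun y' η' => phiT φ₁ φ₂ Y N x ξ y' η') y η + y)
      ≤ (1/4) * enorm2 η := by
    have hm : (0:ℝ) < (1-k)/2 * jb ξ := mul_pos (by linarith) hjξ
    have hK0 : 0 ≤ τ₁ * jb x / ((1-k)/2 * jb ξ) :=
      div_nonneg (mul_nonneg hτ₁ hjx.le) hm.le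
    have hKbd : ∀ i : Fin n, ∀ q : V n, (1-k)/2 * jb ξ ≤ jb q → ∀ j : Fin n,
        |fderiv ℝ (fun q' => pdXi i (Jfun φ₁) x q') q (Pi.single j 1)|
          ≤ τ₁ * jb x / ((1-k)/2 * jb ξ) := by
      intro i q hq j
      have hb := hJ1 [] [j, i] (by simp) x q
      have hmd : mderiv [] [j, i] (Jfun φ₁) x q
          = fderiv ℝ (fun q' => pdXi i (Jfun φ₁) x q') q (Pi.single j 1) := rfl
      rw [hmd] at hb
      simp only [List.length_cons, List.length_nil, Nat.cast_ofNat, Nat.cast_zero] at hb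
      norm_num at hb
      rw [Real.rpow_neg_one] at hb
      have hinv : (jb q)⁻¹ ≤ ((1-k)/2 * jb ξ)⁻¹ := inv_anti₀ hm hq
      calc |fderiv ℝ (fun q' => pdXi i (Jfun φ₁) x q') q (Pi.single j 1)|
          ≤ τ₁ * jb x * (jb q)⁻¹ := hb
        _ ≤ τ₁ * jb x * ((1-k)/2 * jb ξ)⁻¹ :=
            mul_le_mul_of_nonneg_left hinv (mul_nonneg hτ₁ hjx.le)
        _ = τ₁ * jb x / ((1-k)/2 * jb ξ) := by ring
    have hlip : ∀ i : Fin n,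
        |pdXi i (Jfun φ₁) x (N x ξ + omegaW x ξ • η) - pdXi i (Jfun φ₁) x (N x ξ)|
          ≤ (n:ℝ) * (τ₁ * jb x / ((1-k)/2 * jb ξ)) * (omegaW x ξ * enorm2 η) := by
      intro i
      have h := Aux.lip_est (fun q' => pdXi i (Jfun φ₁) x q')
        (Aux.contDiff_pdXi_slice (Aux.contDiff_J h1s) i x)
        (τ₁ * jb x / ((1-k)/2 * jb ξ)) ((1-k)/2 * jb ξ) hK0
        (N x ξ) (omegaW x ξ • η) hseg2 (hKbd i)
      rw [Aux.enorm2_smul, abs_of_pos hωpos] at h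
      exact h
    have hcomp : ∀ i : Fin n,
        |(gradXi (fun y' η' => phiT φ₁ φ₂ Y N x ξ y' η') y η + y) i|
          ≤ omegaW x ξ * ((n:ℝ) * (τ₁ * jb x / ((1-k)/2 * jb ξ))
              * (omegaW x ξ * enorm2 η)) := by
      intro i
      have hform := Aux.gradXi_phiT' φ₁ φ₂ h1s Y N hcrit x ξ y η i
      have happ : (gradXi (fun y' η' => phiT φ₁ φ₂ Y N x ξ y' η') y η + y) i
          = omegaW x ξ * (pdXi i (Jfun φ₁) x (N x ξ + omegaW x ξ • η)
              - pdXi i (Jfun φ₁) x (N x ξ)) := by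
        have : (gradXi (fun y' η' => phiT φ₁ φ₂ Y N x ξ y' η') y η + y) i
            = gradXi (fun y' η' => phiT φ₁ φ₂ Y N x ξ y' η') y η i + y i := rfl
        rw [this, hform]; ring
      rw [happ, abs_mul, abs_of_pos hωpos]
      exact mul_le_mul_of_nonneg_left (hlip i) hωpos.le
    have hsum' : enorm2 (gradXi (fun y' η' => phiT φ₁ φ₂ Y N x ξ y' η') y η + y)
        ≤ (n:ℝ) * (omegaW x ξ * ((n:ℝ) * (τ₁ * jb x / ((1-k)/2 * jb ξ))
            * (omegaW x ξ * enorm2 η))) := by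
      calc enorm2 _ ≤ ∑ i, |(gradXi (fun y' η' => phiT φ₁ φ₂ Y N x ξ y' η') y η + y) i| :=
            Aux.enorm2_le_sum_abs _
        _ ≤ ∑ _i : Fin n, omegaW x ξ * ((n:ℝ) * (τ₁ * jb x / ((1-k)/2 * jb ξ))
              * (omegaW x ξ * enorm2 η)) := Finset.sum_le_sum fun i _ => hcomp i
        _ = (n:ℝ) * (omegaW x ξ * ((n:ℝ) * (τ₁ * jb x / ((1-k)/2 * jb ξ))
              * (omegaW x ξ * enorm2 η))) := by
            rw [Finset.sum_const, Finset.card_univ, Fintype.card_fin, nsmul_eq_mul]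
    refine hsum'.trans ?_
    have ha2 : omegaW x ξ * omegaW x ξ = jb ξ / jb x := by
      have := Aux.omegaW_sq x ξ; rwa [sq] at this
    have heq : (n:ℝ) * (omegaW x ξ * ((n:ℝ) * (τ₁ * jb x / ((1-k)/2 * jb ξ))
          * (omegaW x ξ * enorm2 η)))
        = 2 * (n:ℝ)^2 * τ₁ / (1-k) * enorm2 η := by
      rw [show (n:ℝ) * (omegaW x ξ * ((n:ℝ) * (τ₁ * jb x / ((1-k)/2 * jb ξ))
          * (omegaW x ξ * enorm2 η)))
          = (omegaW x ξ * omegaW x ξ) * ((n:ℝ) * ((n:ℝ) * (τ₁ * jb x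
              / ((1-k)/2 * jb ξ)))) * enorm2 η by ring, ha2]
      field_simp
    rw [heq]
    have hτ₁' : τ₁ ≤ (1-k)/(8*(n:ℝ)^2) := by linarith
    have h8 : τ₁ * (8*(n:ℝ)^2) ≤ 1 - k := (le_div_iff₀ (by positivity)).1 hτ₁'
    rw [div_mul_eq_mul_div, div_le_iff₀ hk']
    nlinarith [mul_le_mul_of_nonneg_right h8 hη0]
  -- conclusion
  have key : ∀ (A w : V n) (e : ℝ), enorm2 (A + w) ≤ e →
      enorm2 w - e ≤ enorm2 A ∧ enorm2 A ≤ e + enorm2 w := by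
    intro A w e h
    constructor
    · have h3 := Aux.enorm2_add_le (A + w) (-A)
      have h4 : A + w + -A = w := by abel
      rw [h4, Aux.enorm2_neg] at h3
      linarith
    · have h3 := Aux.enorm2_add_le (A + w) (-w)
      have h4 : A + w + -w = A := by abel
      rw [h4, Aux.enorm2_neg] at h3
      linarith
  obtain ⟨hA1, hA2⟩ := key _ _ _ hAbd
  obtain ⟨hB1, hB2⟩ := key _ _ _ hBbd
  constructor
  · linarith
  · linarith
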